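/- arXiv:2012.12985 — 3 statements merged into one kernel-verified Lean document; each statement's English description precedes it below -/
import Mathlib

section
/- Let A be a commutative ℚ-algebra, M a free A-module of finite rank, and let C• be a cochain complex of A-modules equipped with a Hirsch extension differential: i.e., fix a map φ : M → Z^1(C•) into degree-1 cocycles, and endow Sym_A(M) ⊗_A C• with the differential d_H(m^{e} ⊗ c) extending d on C• by d_H(m ⊗ 1) = 1 ⊗ φ(m) via the Leibniz rule. If C• is acyclic, then the Hirsch extension Sym_A(M) ⊗_A C• is acyclic. -/
/-! Filter `A[u_1, …, u_r] ⊗ C•` by polynomial degree. On coefficients, `d_H` is `d` applied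
coefficientwise plus the terms `∂/∂u_k ⊗ φ(m_k)`, which strictly lower the degree, so the
associated graded complex is a direct sum of copies of the acyclic `C•`. Hence the top-degree
part of a cycle is a coefficientwise `d`-boundary; subtracting the corresponding `d_H`-boundary
lowers the degree, and induction on the degree shows that every cycle is a boundary.

For `d_H² = 0` the mixed terms cancel by the Leibniz rule and the quadratic terms by
anticommutativity of the `φ(m_k)`; the diagonal terms `∂²/∂u_k² ⊗ φ(m_k)²` only satisfy
`2 φ(m_k)² = 0`, which is where `1/2 ∈ A` is needed. -/

open TensorProduct MvPolynomial

section DegreeFiltration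

variable {R ι V₁ V₂ V₃ : Type*} [CommRing R] [AddCommGroup V₁] [Module R V₁]
  [AddCommGroup V₂] [Module R V₂] [AddCommGroup V₃] [Module R V₃]

def StrictlyLowersDegree (deg : ι → ℕ) (T : (ι →₀ V₁) →ₗ[R] (ι →₀ V₂)) : Prop :=
  ∀ n x, x ∈ Finsupp.supported V₁ R {i | deg i ≤ n} →
    T x ∈ Finsupp.supported V₂ R {i | deg i < n}

lemma StrictlyLowersDegree.apply_eq_of_le_degree {deg : ι → ℕ}
    {D : (ι →₀ V₁) →ₗ[R] (ι →₀ V₂)} {d : V₁ →ₗ[R] V₂}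
    (hD : StrictlyLowersDegree deg (D - Finsupp.mapRange.linearMap d)) {n : ℕ} {x : ι →₀ V₁}
    (hx : x ∈ Finsupp.supported V₁ R {i | deg i ≤ n}) {i : ι} (hi : n ≤ deg i) :
    D x i = d (x i) := by
  have := (Finsupp.mem_supported' _ _).1 (hD n x hx) i (not_lt.2 hi)
  rwa [LinearMap.sub_apply, Finsupp.sub_apply, sub_eq_zero] at this

lemma Finsupp.exists_lift_of_mem_range (g : V₁ →ₗ[R] V₂) (x : ι →₀ V₂) (s : Set ι)
    (hx : ∀ i ∈ s, x i ∈ LinearMap.range g) :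
    ∃ y : ι →₀ V₁, y.support ⊆ x.support ∧ ∀ i ∈ s, g (y i) = x i := by
  classical
  have hlift : ∀ i, ∃ v, i ∈ s → g v = x i := fun i => by
    by_cases hi : i ∈ s
    · obtain ⟨v, hv⟩ := hx i hi
      exact ⟨v, fun _ => hv⟩
    · exact ⟨0, fun h => absurd h hi⟩
  choose c hc using hlift
  refine ⟨Finsupp.onFinset x.support (fun i => if x i = 0 then 0 else c i) fun i hi => ?_,
    Finsupp.support_onFinset_subset, fun i hi => ?_⟩
  · rw [Finsupp.mem_support_iff]
    rintro h
    simp [h] at hi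
  · rw [Finsupp.onFinset_apply]
    split_ifs with h0
    · rw [map_zero, h0]
    · exact hc i hi

theorem exact_of_strictlyLowersDegree_sub_mapRange {d₁ : V₁ →ₗ[R] V₂} {d₂ : V₂ →ₗ[R] V₃}
    (hd : Function.Exact d₁ d₂) (deg : ι → ℕ)
    {D₁ : (ι →₀ V₁) →ₗ[R] (ι →₀ V₂)} {D₂ : (ι →₀ V₂) →ₗ[R] (ι →₀ V₃)} (hD : D₂ ∘ₗ D₁ = 0)
    (h₁ : StrictlyLowersDegree deg (D₁ - Finsupp.mapRange.linearMap d₁))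
    (h₂ : StrictlyLowersDegree deg (D₂ - Finsupp.mapRange.linearMap d₂)) :
    Function.Exact D₁ D₂ := by
  suffices h : ∀ n, ∀ x ∈ Finsupp.supported V₂ R {i | deg i < n}, D₂ x = 0 →
      x ∈ LinearMap.range D₁ by
    refine LinearMap.exact_iff.2 (le_antisymm (fun x hx => ?_) (LinearMap.range_le_ker_iff.2 hD))
    refine h (x.support.sup deg + 1) x ((Finsupp.mem_supported _ _).2 fun i hi => ?_) hx
    exact Nat.lt_succ_of_le (Finset.le_sup hi)
  intro n
  induction n with
  | zero =>
    intro x hx _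
    have : x = 0 := Finsupp.ext fun i => (Finsupp.mem_supported' _ _).1 hx i (Nat.not_lt_zero _)
    exact this ▸ Submodule.zero_mem _
  | succ n ih =>
    intro x hx hDx
    have hx' : x ∈ Finsupp.supported V₂ R {i | deg i ≤ n} :=
      Finsupp.supported_mono (fun i hi => Nat.lt_succ_iff.1 hi) hx
    have htop : ∀ i ∈ {i | n ≤ deg i}, x i ∈ LinearMap.range d₁ := fun i hi =>
      (hd (x i)).1 (by rw [← h₂.apply_eq_of_le_degree hx' hi, hDx,
        Finsupp.zero_apply])
    obtain ⟨y, hyx, hy⟩ := Finsupp.exists_lift_of_mem_range d₁ x _ htop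
    have hy' : y ∈ Finsupp.supported V₁ R {i | deg i ≤ n} :=
      (Finsupp.mem_supported _ _).2 ((Finset.coe_subset.2 hyx).trans
        ((Finsupp.mem_supported _ _).1 hx'))
    have hlower : x - D₁ y ∈ Finsupp.supported V₂ R {i | deg i < n} := by
      refine (Finsupp.mem_supported' _ _).2 fun i hi => ?_
      have hi : n ≤ deg i := not_lt.1 hi
      rw [Finsupp.sub_apply, h₁.apply_eq_of_le_degree hy' hi, hy i hi,
        sub_self]
    obtain ⟨z, hz⟩ := ih _ hlower (by
      rw [map_sub, hDx, ← LinearMap.comp_apply, hD, LinearMap.zero_apply, sub_zero])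
    exact ⟨z + y, by rw [map_add, hz, sub_add_cancel]⟩

end DegreeFiltration

lemma sum_sum_eq_zero_of_antisymm {R M κ : Type*} [CommRing R] [AddCommGroup M] [Module R M]
    [Fintype κ] (h2 : IsUnit (2 : R)) (T : κ → κ → M) (hT : ∀ k l, T k l = -T l k) :
    ∑ k, ∑ l, T k l = 0 := by
  rw [← h2.smul_eq_zero, two_smul]
  nth_rewrite 2 [Finset.sum_comm]
  rw [← Finset.sum_add_distrib]
  exact Finset.sum_eq_zero fun k _ => by
    rw [← Finset.sum_add_distrib]
    exact Finset.sum_eq_zero fun l _ => by rw [hT k l, neg_add_cancel]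

lemma MvPolynomial.pderiv_pderiv_comm {σ R : Type*} [CommRing R] (k l : σ) (p : MvPolynomial σ R) :
    pderiv k (pderiv l p) = pderiv l (pderiv k p) := by
  classical
  have : ⁅pderiv k, pderiv l⁆ = (0 : Derivation R (MvPolynomial σ R) (MvPolynomial σ R)) :=
    derivation_ext fun i => by
      rw [Derivation.commutator_apply]
      simp [pderiv_X, Pi.single_apply, apply_ite]
  have h := congrArg (fun D => D p) this
  rwa [Derivation.commutator_apply, Derivation.zero_apply, sub_eq_zero] at h

section Hirsch

variable {A σ M N P : Type*} [CommRing A] [Fintype σ] [AddCommGroup M] [Module A M]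
  [AddCommGroup N] [Module A N] [AddCommGroup P] [Module A P]

noncomputable def hirschDifferential (d : M →ₗ[A] N) (ω : σ → M →ₗ[A] N) :
    MvPolynomial σ A ⊗[A] M →ₗ[A] MvPolynomial σ A ⊗[A] N :=
  (∑ k, TensorProduct.map (pderiv k).toLinearMap (ω k)) + TensorProduct.map LinearMap.id d

lemma hirschDifferential_tmul (d : M →ₗ[A] N) (ω : σ → M →ₗ[A] N) (p : MvPolynomial σ A)
    (c : M) : hirschDifferential d ω (p ⊗ₜ c) = ∑ k, pderiv k p ⊗ₜ ω k c + p ⊗ₜ d c := by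
  simp [hirschDifferential]

theorem hirschDifferential_comp_hirschDifferential (h2 : IsUnit (2 : A))
    {d : M →ₗ[A] N} {d' : N →ₗ[A] P} {ω : σ → M →ₗ[A] N} {ω' : σ → N →ₗ[A] P}
    (hdd : ∀ c, d' (d c) = 0) (hLeib : ∀ k c, d' (ω k c) = -ω' k (d c))
    (hanti : ∀ k l c, ω' k (ω l c) = -ω' l (ω k c)) :
    hirschDifferential d' ω' ∘ₗ hirschDifferential d ω = 0 := by
  refine TensorProduct.ext' fun p c => ?_
  have hquad : ∑ l, ∑ k, pderiv k (pderiv l p) ⊗ₜ[A] ω' k (ω l c) = 0 :=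
    sum_sum_eq_zero_of_antisymm h2 _ fun l k => by
      rw [hanti, tmul_neg, pderiv_pderiv_comm]
  simp only [LinearMap.comp_apply, LinearMap.zero_apply, hirschDifferential_tmul, map_add,
    map_sum, hLeib, hdd, tmul_neg, tmul_zero, add_zero, Finset.sum_add_distrib, hquad, zero_add,
    Finset.sum_neg_distrib, neg_add_cancel]

variable (A σ M) in
noncomputable def coeffTensorEquiv : MvPolynomial σ A ⊗[A] M ≃ₗ[A] (σ →₀ ℕ) →₀ M :=
  LinearEquiv.rTensor M (basisMonomials σ A).repr ≪≫ₗ TensorProduct.finsuppScalarLeft A M _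

@[simp]
lemma coeffTensorEquiv_tmul_apply (p : MvPolynomial σ A) (c : M) (f : σ →₀ ℕ) :
    coeffTensorEquiv A σ M (p ⊗ₜ c) f = coeff f p • c := by
  simp [coeffTensorEquiv]
  rfl

lemma coeffTensorEquiv_hirschDifferential_apply (d : M →ₗ[A] N) (ω : σ → M →ₗ[A] N)
    (t : MvPolynomial σ A ⊗[A] M) (f : σ →₀ ℕ) :
    coeffTensorEquiv A σ N (hirschDifferential d ω t) f =
      d (coeffTensorEquiv A σ M t f) +
        ∑ k, (f k + 1) • ω k (coeffTensorEquiv A σ M t (f + Finsupp.single k 1)) := by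
  induction t using TensorProduct.induction_on with
  | zero => simp
  | tmul p c =>
    simp only [hirschDifferential_tmul, map_add, map_sum, Finsupp.add_apply, Finsupp.coe_finsetSum,
      Finset.sum_apply, coeffTensorEquiv_tmul_apply, coeff_pderiv, map_smul, add_comm, mul_smul]
    congr 1
    refine Finset.sum_congr rfl fun k _ => ?_
    rw [smul_comm, ← Nat.cast_smul_eq_nsmul A, Nat.cast_add, Nat.cast_one]
  | add t t' ht ht' =>
    simp only [map_add, Finsupp.add_apply, ht, ht', smul_add, Finset.sum_add_distrib]
    abel

lemma strictlyLowersDegree_hirschDifferential_sub_mapRange (d : M →ₗ[A] N)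
    (ω : σ → M →ₗ[A] N) :
    StrictlyLowersDegree Finsupp.degree
      (LinearEquiv.arrowCongr (coeffTensorEquiv A σ M) (coeffTensorEquiv A σ N)
        (hirschDifferential d ω) - Finsupp.mapRange.linearMap d) := by
  intro n x hx
  refine (Finsupp.mem_supported' _ _).2 fun f hf => ?_
  have hvanish : ∀ k, x (f + Finsupp.single k 1) = 0 := fun k =>
    (Finsupp.mem_supported' _ _).1 hx _ fun hk => by
      change (f + Finsupp.single k 1).degree ≤ n at hk
      rw [map_add, Finsupp.degree_single] at hk
      exact hf (by change f.degree < n; omega)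
  simp [coeffTensorEquiv_hirschDifferential_apply, hvanish]

theorem hirschDifferential_exact (h2 : IsUnit (2 : A))
    {d : M →ₗ[A] N} {d' : N →ₗ[A] P} {ω : σ → M →ₗ[A] N} {ω' : σ → N →ₗ[A] P}
    (hd : Function.Exact d d') (hLeib : ∀ k c, d' (ω k c) = -ω' k (d c))
    (hanti : ∀ k l c, ω' k (ω l c) = -ω' l (ω k c)) :
    Function.Exact (hirschDifferential d ω) (hirschDifferential d' ω') := by
  refine (Function.Exact.iff_of_ladder_linearEquiv (e₁ := coeffTensorEquiv A σ M)
    (e₂ := coeffTensorEquiv A σ N) (e₃ := coeffTensorEquiv A σ P)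
    (LinearMap.ext fun _ => by simp) (LinearMap.ext fun _ => by simp)).1
    (exact_of_strictlyLowersDegree_sub_mapRange hd Finsupp.degree ?_
      (strictlyLowersDegree_hirschDifferential_sub_mapRange d ω)
      (strictlyLowersDegree_hirschDifferential_sub_mapRange d' ω'))
  rw [← LinearEquiv.arrowCongr_comp, hirschDifferential_comp_hirschDifferential h2
    (fun c => hd.apply_apply_eq_zero c) hLeib hanti, map_zero]

end Hirsch

theorem hirsch_extension_of_acyclic_is_acyclic_general
    (A : Type*) [CommRing A] [Algebra ℚ A] (r : ℕ)
    (C : ℤ → Type*) [∀ q, AddCommGroup (C q)] [∀ q, Module A (C q)]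
    (d : ∀ q : ℤ, C q →ₗ[A] C (q + 1))
    -- left multiplication by the degree-one cocycles `φ(m_k)` on the dg-module `C•`:
    (mulω : Fin r → ∀ q : ℤ, C q →ₗ[A] C (q + 1))
    (hLeib : ∀ k q (c : C q), d (q + 1) (mulω k q c) = - mulω k (q + 1) (d q c))
    (hanti : ∀ k l q (c : C q),
      mulω k (q + 1) (mulω l q c) = - mulω l (q + 1) (mulω k q c))
    -- the Hirsch extension differential on `Sym_A(M) ⊗_A C•`:
    (dH : ∀ q : ℤ,
      (MvPolynomial (Fin r) A ⊗[A] C q) →ₗ[A] (MvPolynomial (Fin r) A ⊗[A] C (q + 1)))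
    (hdH : ∀ q, dH q =
      (∑ k : Fin r, TensorProduct.map (MvPolynomial.pderiv k).toLinearMap (mulω k q))
        + TensorProduct.map LinearMap.id (d q))
    (hacyclic : ∀ q : ℤ, LinearMap.range (d q) = LinearMap.ker (d (q + 1))) :
    ∀ q : ℤ, LinearMap.range (dH q) = LinearMap.ker (dH (q + 1)) := by
  intro q
  have h2 : IsUnit (2 : A) := by
    simpa only [map_ofNat] using (two_ne_zero : (2 : ℚ) ≠ 0).isUnit.map (algebraMap ℚ A)
  have hexact : Function.Exact (hirschDifferential (d q) (mulω · q))
      (hirschDifferential (d (q + 1)) (mulω · (q + 1))) :=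
    hirschDifferential_exact h2 (LinearMap.exact_iff.2 (hacyclic q).symm)
      (fun k => hLeib k q) (fun k l => hanti k l q)
  rw [hdH, hdH]
  exact (LinearMap.exact_iff.1 hexact).symm

/-- Let `A` be a commutative `ℚ`-algebra, `M = A^r` a free `A`-module of finite rank, and
`C•` a cochain complex of `A`-modules which is a dg-module, with fixed degree-one cocycles
`φ(m_1), …, φ(m_r)` acting via the operators `mulω k`.  Endow
`Sym_A(M) ⊗_A C• = A[u_1,…,u_r] ⊗_A C•` with the Hirsch extension differential
`d_H = Σ_k ∂/∂u_k ⊗ (φ(m_k) ∧ ·) + id ⊗ d`.  If `C•` is acyclic, then the Hirsch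
extension is acyclic. -/
theorem hirsch_extension_of_acyclic_is_acyclic
    (A : Type*) [CommRing A] [Algebra ℚ A] (r : ℕ)
    (C : ℤ → Type*) [∀ q, AddCommGroup (C q)] [∀ q, Module A (C q)]
    (d : ∀ q : ℤ, C q →ₗ[A] C (q + 1))
    (hd2 : ∀ q (c : C q), d (q + 1) (d q c) = 0)
    -- left multiplication by the degree-one cocycles `φ(m_k)` on the dg-module `C•`:
    (mulω : Fin r → ∀ q : ℤ, C q →ₗ[A] C (q + 1))
    (hLeib : ∀ k q (c : C q), d (q + 1) (mulω k q c) = - mulω k (q + 1) (d q c))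
    (hanti : ∀ k l q (c : C q),
      mulω k (q + 1) (mulω l q c) = - mulω l (q + 1) (mulω k q c))
    -- the Hirsch extension differential on `Sym_A(M) ⊗_A C•`:
    (dH : ∀ q : ℤ,
      (MvPolynomial (Fin r) A ⊗[A] C q) →ₗ[A] (MvPolynomial (Fin r) A ⊗[A] C (q + 1)))
    (hdH : ∀ q, dH q =
      (∑ k : Fin r, TensorProduct.map (MvPolynomial.pderiv k).toLinearMap (mulω k q))
        + TensorProduct.map LinearMap.id (d q))
    (hacyclic : ∀ q : ℤ, LinearMap.range (d q) = LinearMap.ker (d (q + 1))) :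
    ∀ q : ℤ, LinearMap.range (dH q) = LinearMap.ker (dH (q + 1)) :=
  hirsch_extension_of_acyclic_is_acyclic_general A r C d mulω hLeib hanti dH hdH hacyclic
end

section
/- Let K be a field, A = K[x_1, ..., x_n], and for each i ∈ {1,...,m} (m ≤ n) let P_i = (x_i) ⊆ A. Then the Čech complex 0 → A/(x_1⋯x_m) → ⊕_i A/(x_i) → ⊕_{i<j} A/(x_i, x_j) → ⋯ → A/(x_1,...,x_m) → 0, with alternating-sum natural maps, is exact. -/
variable {A : Type*} [CommRing A] {m : ℕ}

/-- The ideal `I_T = Σ_{i ∈ T} I_i` attached to a finite set of indices. -/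
noncomputable def ITot (I : Fin m → Ideal A) (T : Finset (Fin m)) : Ideal A :=
  ⨆ i ∈ T, I i

/-- The Čech-type differential
`⊕_{i_0<⋯<i_k} A/(I_{i_0}+⋯+I_{i_k}) → ⊕_{i_0<⋯<i_{k+1}} A/(I_{i_0}+⋯+I_{i_{k+1}})`,
the alternating sum of the canonical surjections. -/
noncomputable def cechMap (I : Fin m → Ideal A) (k : ℕ) :
    ((T : {T : Finset (Fin m) // T.card = k + 1}) → A ⧸ ITot I T.1) →ₗ[A]
      ((T : {T : Finset (Fin m) // T.card = k + 2}) → A ⧸ ITot I T.1) :=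
  LinearMap.pi fun T' =>
    ∑ j ∈ T'.1.attach,
      ((-1 : ℤ) ^ ((T'.1.filter (· < j.1)).card)) •
        ((Submodule.mapQ (ITot I (T'.1.erase j.1)) (ITot I T'.1) LinearMap.id
            (by
              rw [Submodule.comap_id]
              exact biSup_mono fun i hi => Finset.mem_of_mem_erase hi)).comp
          (LinearMap.proj
            (⟨T'.1.erase j.1, by simp [Finset.card_erase_of_mem j.2, T'.2]⟩ :
              {T : Finset (Fin m) // T.card = k + 1})))

/-- The augmentation `A/J → ⊕_i A/I_i` for an ideal `J` contained in all the `I_i`. -/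
noncomputable def cechInitOf (I : Fin m → Ideal A) (J : Ideal A) (hJ : ∀ i, J ≤ I i) :
    (A ⧸ J) →ₗ[A]
      ((T : {T : Finset (Fin m) // T.card = 0 + 1}) → A ⧸ ITot I T.1) :=
  LinearMap.pi fun T =>
    Submodule.mapQ _ _ LinearMap.id (by
      rw [Submodule.comap_id]
      obtain ⟨i, hi⟩ := Finset.card_pos.mp (by rw [T.2]; omega)
      exact le_trans (hJ i) (le_biSup _ hi))


section CechAux
open MvPolynomial Finset



noncomputable def eps (T : Finset (Fin m)) (j : Fin m) : ℤ :=
  (-1) ^ ((T.filter (· < j)).card)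

lemma neg_one_pow_mod (a : ℕ) : ((-1 : ℤ)) ^ a = (-1) ^ (a % 2) := by
  conv_lhs => rw [← Nat.div_add_mod a 2]
  rw [pow_add, pow_mul]
  simp

lemma neg_one_pow_parity {a b : ℕ} (hp : a % 2 = b % 2) : ((-1 : ℤ)) ^ a = (-1) ^ b := by
  rw [neg_one_pow_mod a, neg_one_pow_mod b, hp]

lemma neg_one_pow_parity' {a b : ℕ} (hp : (a + 1) % 2 = b % 2) :
    ((-1 : ℤ)) ^ a = -(-1) ^ b := by
  have := neg_one_pow_parity hp
  rw [pow_succ] at this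
  linarith

lemma filter_lt_card_erase (T : Finset (Fin m)) {j : Fin m} (hj : j ∈ T) (v : Fin m) :
    (T.filter (· < v)).card = ((T.erase j).filter (· < v)).card + (if j < v then 1 else 0) := by
  classical
  rw [Finset.filter_erase]
  by_cases hjv : j < v
  · rw [if_pos hjv, Finset.card_erase_add_one (show j ∈ T.filter (· < v) from Finset.mem_filter.mpr ⟨hj, hjv⟩)]
  · rw [if_neg hjv, Finset.erase_eq_of_notMem (show j ∉ T.filter (· < v) from fun hc => hjv (Finset.mem_filter.mp hc).2),
      add_zero]

lemma filter_lt_card_insert (T : Finset (Fin m)) {v : Fin m} (hv : v ∉ T) (j : Fin m) :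
    ((insert v T).filter (· < j)).card = (T.filter (· < j)).card + (if v < j then 1 else 0) := by
  classical
  rw [Finset.filter_insert]
  by_cases hvj : v < j
  · rw [if_pos hvj, if_pos hvj,
      Finset.card_insert_of_notMem (show v ∉ T.filter (· < j) from fun hc => hv (Finset.mem_filter.mp hc).1)]
  · rw [if_neg hvj, if_neg hvj, add_zero]

lemma eps_erase_self (T : Finset (Fin m)) {v : Fin m} (hv : v ∈ T) :
    eps T v * eps (T.erase v) v = 1 := by
  unfold eps
  have := filter_lt_card_erase T hv v
  rw [if_neg (lt_irrefl v), add_zero] at this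
  rw [this, ← pow_add]
  exact Even.neg_one_pow ⟨_, rfl⟩

lemma eps_sq (T : Finset (Fin m)) (v : Fin m) : eps T v * eps T v = 1 := by
  unfold eps
  rw [← pow_add]
  exact Even.neg_one_pow ⟨_, rfl⟩

/-- Case-B sign identity. -/
lemma eps_caseB (T : Finset (Fin m)) {j v : Fin m} (hj : j ∈ T) (hv : v ∉ T) :
    eps T j * eps (T.erase j) v = -(eps (insert v T) v * eps (insert v T) j) := by
  classical
  unfold eps
  have hjv : j ≠ v := fun hc => hv (hc ▸ hj)
  rw [← pow_add, ← pow_add]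
  have h1 := filter_lt_card_erase T hj v
  have h2 := filter_lt_card_insert T hv j
  have h3 := filter_lt_card_insert T hv v
  rw [if_neg (lt_irrefl v), add_zero] at h3
  set a := (T.filter (· < j)).card
  set b := ((T.erase j).filter (· < v)).card
  set cv := (T.filter (· < v)).card
  have hxy : (if j < v then (1:ℕ) else 0) + (if v < j then 1 else 0) = 1 := by
    rcases lt_or_gt_of_ne hjv with hlt | hgt
    · rw [if_pos hlt, if_neg (asymm hlt)]
    · rw [if_neg (asymm hgt), if_pos hgt]
  apply neg_one_pow_parity'
  omega

/-- antisymmetry sign identity for `d ∘ d = 0`. -/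
lemma eps_antisymm (T : Finset (Fin m)) {j j' : Fin m} (hj : j ∈ T) (hj' : j' ∈ T)
    (hne : j ≠ j') :
    eps T j * eps (T.erase j) j' = -(eps T j' * eps (T.erase j') j) := by
  classical
  unfold eps
  rw [← pow_add, ← pow_add]
  have h1 := filter_lt_card_erase T hj j'
  have h2 := filter_lt_card_erase T hj' j
  have hxy : (if j < j' then (1:ℕ) else 0) + (if j' < j then 1 else 0) = 1 := by
    rcases lt_or_gt_of_ne hne with hlt | hgt
    · rw [if_pos hlt, if_neg (asymm hlt)]
    · rw [if_neg (asymm hgt), if_pos hgt]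
  apply neg_one_pow_parity'
  omega

lemma cechMap_apply_mk (I : Fin m → Ideal A) (k : ℕ) (q : Finset (Fin m) → A)
    (T' : {T : Finset (Fin m) // T.card = k + 2}) :
    cechMap I k (fun T => Submodule.Quotient.mk (q T.1)) T' =
      Submodule.Quotient.mk (∑ j ∈ T'.1, eps T'.1 j • q (T'.1.erase j)) := by
  unfold cechMap
  rw [LinearMap.pi_apply, LinearMap.sum_apply]
  simp only [LinearMap.smul_apply, LinearMap.comp_apply, LinearMap.proj_apply,
    Submodule.mapQ_apply, LinearMap.id_apply]
  simp_rw [← Submodule.mkQ_apply, ← map_zsmul, ← map_sum]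
  congr 1
  rw [← Finset.sum_attach T'.1 (fun j => eps T'.1 j • q (T'.1.erase j))]
  rfl

lemma cechInitOf_apply_mk (I : Fin m → Ideal A) (J : Ideal A) (hJ : ∀ i, J ≤ I i) (g : A)
    (T : {T : Finset (Fin m) // T.card = 0 + 1}) :
    cechInitOf I J hJ (Submodule.Quotient.mk g) T = Submodule.Quotient.mk g := by
  unfold cechInitOf
  rw [LinearMap.pi_apply, Submodule.mapQ_apply, LinearMap.id_apply]


variable {K : Type*} [Field K] {n : ℕ}

/-- the smallest index whose variable does not divide μ -/
noncomputable def vmin (h : m ≤ n) (μ : Fin n →₀ ℕ) (hne : (Finset.univ.filter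
    (fun i : Fin m => μ (Fin.castLE h i) = 0)).Nonempty) : Fin m :=
  (Finset.univ.filter (fun i : Fin m => μ (Fin.castLE h i) = 0)).min' hne

lemma vmin_spec (h : m ≤ n) (μ : Fin n →₀ ℕ) (hne) :
    μ (Fin.castLE h (vmin h μ hne)) = 0 ∧
      ∀ w < vmin h μ hne, μ (Fin.castLE h w) ≠ 0 := by
  constructor
  · have := Finset.min'_mem _ hne
    simpa [vmin] using this
  · intro w hw hzero
    have hmem : w ∈ Finset.univ.filter (fun i : Fin m => μ (Fin.castLE h i) = 0) := by
      simp [hzero]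
    exact absurd (Finset.min'_le _ _ hmem) (not_le.mpr hw)

lemma vmin_unique (h : m ≤ n) (μ : Fin n →₀ ℕ) (hne) {v : Fin m}
    (h1 : μ (Fin.castLE h v) = 0) (h2 : ∀ w < v, μ (Fin.castLE h w) ≠ 0) :
    v = vmin h μ hne := by
  obtain ⟨g1, g2⟩ := vmin_spec h μ hne
  rcases lt_trichotomy v (vmin h μ hne) with hlt | heq | hgt
  · exact absurd h1 (g2 v hlt)
  · exact heq
  · exact absurd g1 (h2 _ hgt)

open scoped Classical in
noncomputable def sel (h : m ≤ n) (v : Fin m) (g : MvPolynomial (Fin n) K) :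
    MvPolynomial (Fin n) K :=
  ∑ μ ∈ g.support.filter
      (fun μ => μ (Fin.castLE h v) = 0 ∧ ∀ w < v, μ (Fin.castLE h w) ≠ 0),
    MvPolynomial.monomial μ (g.coeff μ)

open scoped Classical in
lemma coeff_sel (h : m ≤ n) (v : Fin m) (g : MvPolynomial (Fin n) K) (μ : Fin n →₀ ℕ) :
    (sel h v g).coeff μ =
      if (μ (Fin.castLE h v) = 0 ∧ ∀ w < v, μ (Fin.castLE h w) ≠ 0) then g.coeff μ
      else 0 := by
  unfold sel
  rw [MvPolynomial.coeff_sum]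
  simp_rw [MvPolynomial.coeff_monomial]
  rw [Finset.sum_ite_eq' (g.support.filter _) μ (fun μ => g.coeff μ)]
  by_cases hs : μ ∈ g.support
  · simp only [Finset.mem_filter, hs, true_and]
  · have h0 : g.coeff μ = 0 := MvPolynomial.notMem_support_iff.mp hs
    simp only [Finset.mem_filter, hs, false_and, if_false, h0, ite_self]

/-- the homotopy polynomial -/
noncomputable def pAux (h : m ≤ n) (r : Finset (Fin m) → MvPolynomial (Fin n) K)
    (S : Finset (Fin m)) : MvPolynomial (Fin n) K :=
  ∑ v ∈ Finset.univ \ S, eps S v • sel h v (r (insert v S))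

lemma coeff_pAux (h : m ≤ n) (r : Finset (Fin m) → MvPolynomial (Fin n) K)
    (S : Finset (Fin m)) (μ : Fin n →₀ ℕ) (hne) :
    (pAux h r S).coeff μ =
      if vmin h μ hne ∈ S then 0
      else eps S (vmin h μ hne) • (r (insert (vmin h μ hne) S)).coeff μ := by
  unfold pAux
  rw [MvPolynomial.coeff_sum]
  have hterm : ∀ v ∈ Finset.univ \ S,
      (eps S v • sel h v (r (insert v S))).coeff μ =
        if v = vmin h μ hne then eps S v • (r (insert v S)).coeff μ else 0 := by
    intro v _
    rw [MvPolynomial.coeff_smul, coeff_sel]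
    by_cases hv : v = vmin h μ hne
    · obtain ⟨g1, g2⟩ := vmin_spec h μ hne
      rw [if_pos hv, if_pos ⟨by rw [hv]; exact g1, by rw [hv]; exact g2⟩]
    · rw [if_neg hv, if_neg, smul_zero]
      intro ⟨h1, h2⟩
      exact hv (vmin_unique h μ hne h1 h2)
  rw [Finset.sum_congr rfl hterm,
    Finset.sum_ite_eq' (Finset.univ \ S) (vmin h μ hne)
      (fun v => eps S v • (r (insert v S)).coeff μ)]
  by_cases hv : vmin h μ hne ∈ S
  · rw [if_neg (by simp [hv]), if_pos hv]
  · rw [if_pos (by simp [hv]), if_neg hv]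

lemma key_homotopy (h : m ≤ n) (r : Finset (Fin m) → MvPolynomial (Fin n) K)
    (T : Finset (Fin m)) (hT : T.Nonempty) (μ : Fin n →₀ ℕ)
    (hμ : ∀ i ∈ T, μ (Fin.castLE h i) = 0)
    (hstar : ∀ v : Fin m, v ∉ T → μ (Fin.castLE h v) = 0 →
      ∑ j ∈ insert v T, eps (insert v T) j • ((r ((insert v T).erase j)).coeff μ) = 0) :
    ∑ j ∈ T, eps T j • ((pAux h r (T.erase j)).coeff μ) = (r T).coeff μ := by
  classical
  obtain ⟨i0, hi0⟩ := hT
  have hne : (Finset.univ.filter fun i : Fin m => μ (Fin.castLE h i) = 0).Nonempty :=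
    ⟨i0, by simp [hμ i0 hi0]⟩
  set v := vmin h μ hne with hvdef
  by_cases hvT : v ∈ T
  · -- Case A
    have hterm : ∀ j ∈ T, eps T j • ((pAux h r (T.erase j)).coeff μ)
        = if j = v then (r T).coeff μ else 0 := by
      intro j hj
      rw [coeff_pAux h r (T.erase j) μ hne, ← hvdef]
      by_cases hjv : j = v
      · subst hjv
        rw [if_neg (Finset.notMem_erase _ _), if_pos rfl, Finset.insert_erase hj,
          smul_smul, eps_erase_self T hj, one_smul]
      · rw [if_pos (Finset.mem_erase.mpr ⟨fun e => hjv e.symm, hvT⟩), smul_zero,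
          if_neg hjv]
    rw [Finset.sum_congr rfl hterm, Finset.sum_ite_eq' T v (fun _ => (r T).coeff μ),
      if_pos hvT]
  · -- Case B
    have hμv : μ (Fin.castLE h v) = 0 := (vmin_spec h μ hne).1
    have hstar' := hstar v hvT hμv
    rw [Finset.sum_insert hvT, Finset.erase_insert hvT] at hstar'
    have hterm : ∀ j ∈ T, eps T j • ((pAux h r (T.erase j)).coeff μ)
        = -(eps (insert v T) v •
            (eps (insert v T) j • ((r ((insert v T).erase j)).coeff μ))) := by
      intro j hj
      have hvj : v ≠ j := fun e => hvT (e ▸ hj)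
      rw [coeff_pAux h r (T.erase j) μ hne, ← hvdef,
        if_neg (fun hc => hvT (Finset.mem_of_mem_erase hc)),
        ← Finset.erase_insert_of_ne hvj, smul_smul, smul_smul,
        eps_caseB T hj hvT, neg_smul]
    rw [Finset.sum_congr rfl hterm, Finset.sum_neg_distrib, ← Finset.smul_sum]
    have hsum : ∑ j ∈ T, eps (insert v T) j • ((r ((insert v T).erase j)).coeff μ)
        = -(eps (insert v T) v • (r T).coeff μ) := eq_neg_of_add_eq_zero_right hstar'
    rw [hsum, smul_neg, neg_neg, smul_smul, eps_sq, one_smul]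

lemma coeff_sum_smul (S : Finset (Fin m)) (z : Fin m → ℤ)
    (p : Fin m → MvPolynomial (Fin n) K) (μ : Fin n →₀ ℕ) :
    (∑ j ∈ S, z j • p j).coeff μ = ∑ j ∈ S, z j • (p j).coeff μ := by
  rw [MvPolynomial.coeff_sum]
  exact Finset.sum_congr rfl fun j _ => MvPolynomial.coeff_smul μ (z j) (p j)

lemma double_sum_zero {M : Type*} [AddCommGroup M] (T : Finset (Fin m))
    (q : Finset (Fin m) → M) :
    ∑ j ∈ T, eps T j •
      (∑ j' ∈ T.erase j, eps (T.erase j) j' • q ((T.erase j).erase j')) = 0 := by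
  classical
  simp_rw [Finset.smul_sum, smul_smul]
  rw [Finset.sum_sigma' T (fun j => T.erase j)
    (fun j j' => (eps T j * eps (T.erase j) j') • q ((T.erase j).erase j'))]
  refine Finset.sum_involution (fun a _ => ⟨a.2, a.1⟩) ?_ ?_ ?_ ?_
  · intro a ha
    obtain ⟨h1, h2⟩ := Finset.mem_sigma.mp ha
    obtain ⟨hne, h1'⟩ := Finset.mem_erase.mp h2
    have := eps_antisymm T h1 h1' (Ne.symm hne)
    rw [this, Finset.erase_right_comm, neg_smul, neg_add_cancel]
  · intro a ha hfa
    obtain ⟨h1, h2⟩ := Finset.mem_sigma.mp ha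
    obtain ⟨hne, _⟩ := Finset.mem_erase.mp h2
    intro hc
    exact hne (congrArg Sigma.fst hc)
  · intro a ha
    obtain ⟨h1, h2⟩ := Finset.mem_sigma.mp ha
    obtain ⟨hne, h1'⟩ := Finset.mem_erase.mp h2
    exact Finset.mem_sigma.mpr ⟨h1', Finset.mem_erase.mpr ⟨Ne.symm hne, h1⟩⟩
  · intro a ha
    rfl

lemma eps_singleton (i : Fin m) : eps {i} i = 1 := by
  unfold eps
  rw [Finset.filter_singleton, if_neg (lt_irrefl i), Finset.card_empty, pow_zero]

lemma eps_pair_lt {x y : Fin m} (hlt : x < y) : eps {x, y} x = 1 ∧ eps {x, y} y = -1 := by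
  constructor
  · unfold eps
    have : ({x, y} : Finset (Fin m)).filter (· < x) = ∅ := by
      ext a
      simp only [Finset.mem_filter, Finset.mem_insert, Finset.mem_singleton,
        Finset.notMem_empty, iff_false]
      rintro ⟨rfl | rfl, hc⟩ <;> omega
    rw [this, Finset.card_empty, pow_zero]
  · unfold eps
    have : ({x, y} : Finset (Fin m)).filter (· < y) = {x} := by
      ext a
      simp only [Finset.mem_filter, Finset.mem_insert, Finset.mem_singleton]
      constructor
      · rintro ⟨rfl | rfl, hc⟩
        · rfl
        · omega
      · rintro rfl
        exact ⟨Or.inl rfl, hlt⟩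
    rw [this, Finset.card_singleton, pow_one]

lemma eps_sum_card_two (T : Finset (Fin m)) (hT : T.card = 2) : ∑ j ∈ T, eps T j = 0 := by
  obtain ⟨x, y, hxy, rfl⟩ := Finset.card_eq_two.mp hT
  rw [Finset.sum_pair hxy]
  rcases lt_or_gt_of_ne hxy with hlt | hgt
  · obtain ⟨e1, e2⟩ := eps_pair_lt hlt
    rw [e1, e2, add_neg_cancel]
  · obtain ⟨e1, e2⟩ := eps_pair_lt hgt
    rw [Finset.pair_comm x y] at *
    rw [e1, e2]
    ring

lemma cechMap_comp_init (I : Fin m → Ideal A) (J : Ideal A) (hJ : ∀ i, J ≤ I i)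
    (a : A ⧸ J) : cechMap I 0 (cechInitOf I J hJ a) = 0 := by
  obtain ⟨g, rfl⟩ := Submodule.Quotient.mk_surjective _ a
  have harg : cechInitOf I J hJ (Submodule.Quotient.mk g)
      = fun T => Submodule.Quotient.mk ((fun _ : Finset (Fin m) => g) T.1) :=
    funext fun T => cechInitOf_apply_mk I J hJ g T
  rw [harg]
  funext T'
  rw [cechMap_apply_mk I 0 (fun _ => g) T']
  show Submodule.Quotient.mk (∑ j ∈ T'.1, eps T'.1 j • g) = _
  rw [← Finset.sum_smul, eps_sum_card_two T'.1 T'.2, zero_smul,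
    Submodule.Quotient.mk_zero]
  rfl

lemma double_sum_zero' {M : Type*} [AddCommGroup M] (T : Finset (Fin m))
    (q : Finset (Fin m) → M) :
    ∑ j ∈ T, eps T j •
      (∑ j' ∈ T.erase j, eps (T.erase j) j' • q ((T.erase j).erase j')) = 0 := by
  classical
  simp_rw [Finset.smul_sum, smul_smul]
  rw [Finset.sum_sigma' T (fun j => T.erase j)
    (fun j j' => (eps T j * eps (T.erase j) j') • q ((T.erase j).erase j'))]
  refine Finset.sum_involution (fun a _ => ⟨a.2, a.1⟩) ?_ ?_ ?_ ?_
  · intro a ha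
    obtain ⟨h1, h2⟩ := Finset.mem_sigma.mp ha
    obtain ⟨hne, h1'⟩ := Finset.mem_erase.mp h2
    have := eps_antisymm T h1 h1' (Ne.symm hne)
    rw [this, Finset.erase_right_comm, neg_smul, neg_add_cancel]
  · intro a ha hfa
    obtain ⟨h1, h2⟩ := Finset.mem_sigma.mp ha
    obtain ⟨hne, _⟩ := Finset.mem_erase.mp h2
    intro hc
    exact hne (congrArg Sigma.fst hc)
  · intro a ha
    obtain ⟨h1, h2⟩ := Finset.mem_sigma.mp ha
    obtain ⟨hne, h1'⟩ := Finset.mem_erase.mp h2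
    exact Finset.mem_sigma.mpr ⟨h1', Finset.mem_erase.mpr ⟨Ne.symm hne, h1⟩⟩
  · intro a ha
    rfl

lemma cechMap_comp_cechMap (I : Fin m → Ideal A) (k : ℕ)
    (b : (T : {T : Finset (Fin m) // T.card = k + 1}) → A ⧸ ITot I T.1) :
    cechMap I (k + 1) (cechMap I k b) = 0 := by
  classical
  have hex : ∀ S : Finset (Fin m), ∃ g : A,
      ∀ hS : S.card = k + 1, Submodule.Quotient.mk g = b ⟨S, hS⟩ := by
    intro S
    by_cases hS : S.card = k + 1
    · obtain ⟨g, hg⟩ := Submodule.Quotient.mk_surjective _ (b ⟨S, hS⟩)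
      exact ⟨g, fun _ => hg⟩
    · exact ⟨0, fun hS' => absurd hS' hS⟩
  choose q hqq using hex
  have hbq : b = fun T => Submodule.Quotient.mk (q T.1) := by
    funext T
    exact (hqq T.1 T.2).symm
  rw [hbq]
  have hdb : cechMap I k (fun T => Submodule.Quotient.mk (q T.1))
      = fun T => Submodule.Quotient.mk
          ((fun S => ∑ j ∈ S, eps S j • q (S.erase j)) T.1) :=
    funext fun T => cechMap_apply_mk I k q T
  rw [hdb]
  funext T'
  rw [cechMap_apply_mk I (k + 1) (fun S => ∑ j ∈ S, eps S j • q (S.erase j)) T']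
  show Submodule.Quotient.mk (∑ j ∈ T'.1, eps T'.1 j •
      (∑ j' ∈ T'.1.erase j, eps (T'.1.erase j) j' • q ((T'.1.erase j).erase j'))) = _
  rw [double_sum_zero' T'.1 q, Submodule.Quotient.mk_zero]
  rfl


lemma prod_X_castLE (h : m ≤ n) :
    (∏ k : Fin m, (X (Fin.castLE h k) : MvPolynomial (Fin n) K)) =
      monomial (∑ k : Fin m, Finsupp.single (Fin.castLE h k) 1) (1 : K) := by
  rw [MvPolynomial.monomial_sum_one]
  exact Finset.prod_congr rfl fun k _ => by rw [← MvPolynomial.X_pow_eq_monomial, pow_one]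

lemma mem_span_prod_of_all (h : m ≤ n) {f : MvPolynomial (Fin n) K}
    (hf : ∀ μ ∈ f.support, ∀ i : Fin m, μ (Fin.castLE h i) ≠ 0) :
    f ∈ Ideal.span {∏ k : Fin m, (X (Fin.castLE h k) : MvPolynomial (Fin n) K)} := by
  classical
  rw [prod_X_castLE h]
  have : ({monomial (∑ k : Fin m, Finsupp.single (Fin.castLE h k) 1) (1 : K)} :
      Set (MvPolynomial (Fin n) K)) =
      (fun s => monomial s (1 : K)) '' {∑ k : Fin m, Finsupp.single (Fin.castLE h k) 1} := by
    simp
  rw [this, MvPolynomial.mem_ideal_span_monomial_image]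
  intro μ hμ
  refine ⟨_, Set.mem_singleton _, ?_⟩
  intro j
  rw [Finsupp.finset_sum_apply]
  simp_rw [Finsupp.single_apply]
  by_cases hj : ∃ k : Fin m, Fin.castLE h k = j
  · obtain ⟨k0, rfl⟩ := hj
    have heq : ∀ k : Fin m, (Fin.castLE h k = Fin.castLE h k0) ↔ (k = k0) := fun k =>
      ⟨fun e => Fin.castLE_injective h e, fun e => e ▸ rfl⟩
    calc (∑ k : Fin m, if Fin.castLE h k = Fin.castLE h k0 then 1 else 0)
        = ∑ k : Fin m, if k = k0 then 1 else 0 := by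
          exact Finset.sum_congr rfl fun k _ => by rw [if_congr (heq k) rfl rfl]
      _ = 1 := by rw [Finset.sum_ite_eq' Finset.univ k0 (fun _ => 1), if_pos (Finset.mem_univ _)]
      _ ≤ μ (Fin.castLE h k0) := Nat.one_le_iff_ne_zero.mpr (hf μ hμ k0)
  · have : ∀ k : Fin m, ¬(Fin.castLE h k = j) := fun k hc => hj ⟨k, hc⟩
    simp only [this, if_false, Finset.sum_const_zero]
    exact Nat.zero_le _

section
variable (h : m ≤ n) (I : Fin m → Ideal (MvPolynomial (Fin n) K))
  (hI : ∀ i, I i = Ideal.span {(MvPolynomial.X (Fin.castLE h i) : MvPolynomial (Fin n) K)})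
include hI

lemma ITot_eq (T : Finset (Fin m)) :
    ITot I T = Ideal.span (MvPolynomial.X '' (Fin.castLE h '' (T : Set (Fin m)))) := by
  unfold ITot
  simp_rw [hI]
  have : (MvPolynomial.X '' (Fin.castLE h '' (T : Set (Fin m))) :
      Set (MvPolynomial (Fin n) K)) = ⋃ i ∈ T, {MvPolynomial.X (Fin.castLE h i)} := by
    ext f
    simp [Set.image_image, eq_comm]
  rw [this, Ideal.span_iUnion]
  refine iSup_congr fun i => ?_
  rw [Ideal.span_iUnion]

lemma mem_ITot {f : MvPolynomial (Fin n) K} {T : Finset (Fin m)} :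
    f ∈ ITot I T ↔ ∀ μ ∈ f.support, ∃ i ∈ T, μ (Fin.castLE h i) ≠ 0 := by
  rw [ITot_eq h I hI, mem_ideal_span_X_image]
  constructor
  · intro H μ hμ
    obtain ⟨i, hi, hne⟩ := H μ hμ
    obtain ⟨a, ha, rfl⟩ := hi
    exact ⟨a, by simpa using ha, hne⟩
  · intro H μ hμ
    obtain ⟨i, hi, hne⟩ := H μ hμ
    exact ⟨Fin.castLE h i, ⟨i, by simpa using hi, rfl⟩, hne⟩

lemma mk_eq_mk_iff {f g : MvPolynomial (Fin n) K} {T : Finset (Fin m)} :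
    (Submodule.Quotient.mk f : _ ⧸ ITot I T) = Submodule.Quotient.mk g ↔
      ∀ μ : Fin n →₀ ℕ, (∀ i ∈ T, μ (Fin.castLE h i) = 0) → f.coeff μ = g.coeff μ := by
  rw [Submodule.Quotient.eq, mem_ITot h I hI]
  constructor
  · intro H μ hμ
    by_contra hne
    have hs : μ ∈ (f - g).support := by
      rw [MvPolynomial.mem_support_iff, MvPolynomial.coeff_sub, sub_ne_zero]
      exact hne
    obtain ⟨i, hi, hne'⟩ := H μ hs
    exact hne' (hμ i hi)
  · intro H μ hμ
    by_contra hcon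
    push_neg at hcon
    rw [MvPolynomial.mem_support_iff, MvPolynomial.coeff_sub, sub_ne_zero] at hμ
    exact hμ (H μ fun i hi => hcon i hi)

lemma mk_eq_zero_iff {f : MvPolynomial (Fin n) K} {T : Finset (Fin m)} :
    (Submodule.Quotient.mk f : _ ⧸ ITot I T) = 0 ↔
      ∀ μ : Fin n →₀ ℕ, (∀ i ∈ T, μ (Fin.castLE h i) = 0) → f.coeff μ = 0 := by
  rw [show (0 : _ ⧸ ITot I T) = Submodule.Quotient.mk 0 from rfl, mk_eq_mk_iff h I hI]
  simp

end

end CechAux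

set_option maxHeartbeats 2000000 in
/-- Let `K` be a field, `A = K[x_1, …, x_n]`, and for `i ∈ {1,…,m}` (with `m ≤ n`) let
`P_i = (x_i)`.  Then the Čech complex
`0 → A/(x_1⋯x_m) → ⊕_i A/(x_i) → ⊕_{i<j} A/(x_i,x_j) → ⋯ → A/(x_1,…,x_m) → 0`,
with alternating-sum natural maps, is exact. -/
theorem cech_complex_variables_exact
    (K : Type*) [Field K] (n : ℕ) (h : m ≤ n) (hm : 0 < m)
    (I : Fin m → Ideal (MvPolynomial (Fin n) K))
    (hI : ∀ i, I i =
      Ideal.span {(MvPolynomial.X (Fin.castLE h i) : MvPolynomial (Fin n) K)}) :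
    Function.Injective
      (cechInitOf I (Ideal.span {∏ k : Fin m, MvPolynomial.X (Fin.castLE h k)})
        (fun i => by
          rw [hI i, Ideal.span_le, Set.singleton_subset_iff]
          exact Ideal.mem_span_singleton.mpr
            (Finset.dvd_prod_of_mem _ (Finset.mem_univ i)))) ∧
    LinearMap.range
      (cechInitOf I (Ideal.span {∏ k : Fin m, MvPolynomial.X (Fin.castLE h k)})
        (fun i => by
          rw [hI i, Ideal.span_le, Set.singleton_subset_iff]
          exact Ideal.mem_span_singleton.mpr
            (Finset.dvd_prod_of_mem _ (Finset.mem_univ i)))) =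
      LinearMap.ker (cechMap I 0) ∧
    ∀ k : ℕ, LinearMap.range (cechMap I k) = LinearMap.ker (cechMap I (k + 1)) := by
  classical
  refine ⟨?_, ?_, ?_⟩
  · -- Injectivity of the augmentation
    intro a b hab
    obtain ⟨f, rfl⟩ := Submodule.Quotient.mk_surjective _ a
    obtain ⟨g, rfl⟩ := Submodule.Quotient.mk_surjective _ b
    rw [Submodule.Quotient.eq]
    apply mem_span_prod_of_all h
    intro μ hμ i
    have hi : ({i} : Finset (Fin m)).card = 0 + 1 := by simp
    have hthis := congrFun hab ⟨{i}, hi⟩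
    rw [cechInitOf_apply_mk, cechInitOf_apply_mk, Submodule.Quotient.eq,
      mem_ITot h I hI] at hthis
    obtain ⟨i', hi', hne⟩ := hthis μ hμ
    rw [Finset.mem_singleton] at hi'
    exact hi' ▸ hne
  · -- range of augmentation = kernel of first differential
    apply le_antisymm
    · rintro x hx
      rw [LinearMap.mem_range] at hx
      obtain ⟨a, rfl⟩ := hx
      exact LinearMap.mem_ker.mpr (cechMap_comp_init I _ _ a)
    · intro c hc
      rw [LinearMap.mem_ker] at hc
      have hex : ∀ S : Finset (Fin m), ∃ g : MvPolynomial (Fin n) K,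
          ∀ hS : S.card = 0 + 1, Submodule.Quotient.mk g = c ⟨S, hS⟩ := by
        intro S
        by_cases hS : S.card = 0 + 1
        · obtain ⟨g, hg⟩ := Submodule.Quotient.mk_surjective _ (c ⟨S, hS⟩)
          exact ⟨g, fun _ => hg⟩
        · exact ⟨0, fun hS' => absurd hS' hS⟩
      choose r hrr using hex
      have hcr : c = fun T => Submodule.Quotient.mk (r T.1) := by
        funext T
        exact (hrr T.1 T.2).symm
      rw [LinearMap.mem_range]
      refine ⟨Submodule.Quotient.mk (pAux h r ∅), ?_⟩
      rw [hcr] at hc ⊢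
      funext T
      rw [cechInitOf_apply_mk, mk_eq_mk_iff h I hI]
      intro μ hμ
      have hT1 : T.1.Nonempty := Finset.card_pos.mp (by rw [T.2]; omega)
      have hstar : ∀ v : Fin m, v ∉ T.1 → μ (Fin.castLE h v) = 0 →
          ∑ j ∈ insert v T.1, eps (insert v T.1) j •
            ((r ((insert v T.1).erase j)).coeff μ) = 0 := by
        intro v hv hμv
        have hS : (insert v T.1).card = 0 + 2 := by
          rw [Finset.card_insert_of_notMem hv, T.2]
        have h0 := congrFun hc ⟨insert v T.1, hS⟩
        rw [cechMap_apply_mk] at h0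
        simp only [Pi.zero_apply] at h0
        rw [mk_eq_zero_iff h I hI] at h0
        have h1 := h0 μ ?_
        · rw [coeff_sum_smul] at h1
          exact h1
        · intro i hi
          rcases Finset.mem_insert.mp hi with rfl | hiT
          · exact hμv
          · exact hμ i hiT
      have hkey := key_homotopy h r T.1 hT1 μ hμ hstar
      obtain ⟨i, hTi⟩ := Finset.card_eq_one.mp T.2
      rw [hTi] at hkey
      rw [Finset.sum_singleton, eps_singleton, one_smul, Finset.erase_singleton] at hkey
      rw [hTi]
      exact hkey
  · -- range = kernel at higher degrees
    intro k
    apply le_antisymm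
    · rintro x hx
      rw [LinearMap.mem_range] at hx
      obtain ⟨b, rfl⟩ := hx
      exact LinearMap.mem_ker.mpr (cechMap_comp_cechMap I k b)
    · intro c hc
      rw [LinearMap.mem_ker] at hc
      have hex : ∀ S : Finset (Fin m), ∃ g : MvPolynomial (Fin n) K,
          ∀ hS : S.card = k + 2, Submodule.Quotient.mk g = c ⟨S, hS⟩ := by
        intro S
        by_cases hS : S.card = k + 2
        · obtain ⟨g, hg⟩ := Submodule.Quotient.mk_surjective _ (c ⟨S, hS⟩)
          exact ⟨g, fun _ => hg⟩
        · exact ⟨0, fun hS' => absurd hS' hS⟩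
      choose r hrr using hex
      have hcr : c = fun T => Submodule.Quotient.mk (r T.1) := by
        funext T
        exact (hrr T.1 T.2).symm
      rw [LinearMap.mem_range]
      refine ⟨fun T' => Submodule.Quotient.mk (pAux h r T'.1), ?_⟩
      rw [hcr] at hc ⊢
      funext T
      refine (cechMap_apply_mk I k (pAux h r) T).trans ?_
      rw [mk_eq_mk_iff h I hI]
      intro μ hμ
      have hT1 : T.1.Nonempty := Finset.card_pos.mp (by rw [T.2]; omega)
      have hstar : ∀ v : Fin m, v ∉ T.1 → μ (Fin.castLE h v) = 0 →
          ∑ j ∈ insert v T.1, eps (insert v T.1) j •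
            ((r ((insert v T.1).erase j)).coeff μ) = 0 := by
        intro v hv hμv
        have hS : (insert v T.1).card = (k + 1) + 2 := by
          rw [Finset.card_insert_of_notMem hv, T.2]
        have h0 := congrFun hc ⟨insert v T.1, hS⟩
        rw [cechMap_apply_mk] at h0
        simp only [Pi.zero_apply] at h0
        rw [mk_eq_zero_iff h I hI] at h0
        have h1 := h0 μ ?_
        · rw [coeff_sum_smul] at h1
          exact h1
        · intro i hi
          rcases Finset.mem_insert.mp hi with rfl | hiT
          · exact hμv
          · exact hμ i hiT
      have hkey := key_homotopy h r T.1 hT1 μ hμ hstar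
      rw [coeff_sum_smul]
      exact hkey
end

section
/- Let f : (C•, F) → (D•, F) be a morphism of filtered cochain complexes of modules over a ring A, where F on C• is complete and exhaustive and F on D• is finite in each degree. If f induces quasi-isomorphisms gr_F^i C• → gr_F^i D• for all i and f itself is a quasi-isomorphism on underlying complexes, then f is a filtered quasi-isomorphism, i.e., F^i C• → F^i D• is a quasi-isomorphism for all i — give a counterexample showing that the graded quasi-isomorphism condition alone (without the underlying quasi-isomorphism) does not suffice when F on C• is not finite. -/
/-!
Pass to the mapping cone of `f` with its induced filtration: `f` is a quasi-isomorphism on `F^i`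
(on `gr^i`, on the whole complex) exactly when `F^i Cone(f)` (`gr^i Cone(f)`, `Cone(f)`) is acyclic.
A cocycle `z` of `F^i Cone(f)` is `d w` for some `w` of `Cone(f)`, and `w ∈ F^j` for some `j ≤ i`
because the filtration of `C` is exhaustive and that of `D` is finite. While `j < i`,
`d w = z ∈ F^(j+1)` makes `w` a cocycle of the acyclic `gr^j Cone(f)`, so subtracting a coboundary
moves `w` into `F^(j+1)` without changing `d w`.

For the counterexample, the differential `1 - X` on `ℚ[X]` with the `X`-adic filtration induces the
identity on every graded piece, but `1` is not a multiple of `1 - X`.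
-/

theorem exists_mem_of_antitone_of_iSup_eq_top {ι R M : Type*} [Preorder ι] [IsCodirectedOrder ι]
    [Nonempty ι] [Semiring R] [AddCommMonoid M] [Module R M] {F : ι → Submodule R M}
    (hF : Antitone F) (h : ⨆ i, F i = ⊤) (x : M) : ∃ i, x ∈ F i :=
  (Submodule.mem_iSup_of_directed F hF.directed_le).1 (h ▸ Submodule.mem_top)

section Acyclic

variable {A : Type*} [CommRing A] {K : ℤ → Type*} [∀ q, AddCommGroup (K q)] [∀ q, Module A (K q)]

/-- The subquotient complex `P / P'` of `(K, d)` is acyclic. -/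
def IsAcyclicMod (d : ∀ q, K q →ₗ[A] K (q + 1)) (P P' : ∀ q, Submodule A (K q)) : Prop :=
  ∀ q, ∀ z ∈ P (q + 1), d (q + 1) z ∈ P' (q + 1 + 1) → ∃ w ∈ P q, z - d q w ∈ P' (q + 1)

variable {d : ∀ q, K q →ₗ[A] K (q + 1)} {G : ℤ → ∀ q, Submodule A (K q)}

theorem exists_preimage_mem_succ (hdd : ∀ q x, d (q + 1) (d q x) = 0) {k q : ℤ}
    (hgr : IsAcyclicMod d (G k) (G (k + 1))) {z : K (q + 1 + 1)} (hz : z ∈ G (k + 1) (q + 1 + 1))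
    {w : K (q + 1)} (hw : w ∈ G k (q + 1)) (hwz : d (q + 1) w = z) :
    ∃ w' ∈ G (k + 1) (q + 1), d (q + 1) w' = z := by
  obtain ⟨u, -, hu⟩ := hgr q w hw (hwz ▸ hz)
  exact ⟨w - d q u, hu, by rw [map_sub, hdd, sub_zero, hwz]⟩

theorem isAcyclicMod_bot_of_gr (hdd : ∀ q x, d (q + 1) (d q x) = 0) (hG : Antitone G)
    (hexh : ∀ q (z : K q), ∃ j, z ∈ G j q) (hK : IsAcyclicMod d ⊤ ⊥)
    (hgr : ∀ k, IsAcyclicMod d (G k) (G (k + 1))) (i : ℤ) : IsAcyclicMod d (G i) ⊥ := by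
  intro q z hz hdz
  obtain ⟨w, -, hw⟩ := hK q z trivial hdz
  rw [Pi.bot_apply, Submodule.mem_bot, sub_eq_zero] at hw
  obtain ⟨p, rfl⟩ : ∃ p, q = p + 1 := ⟨q - 1, by ring⟩
  obtain ⟨j, hj⟩ := hexh _ w
  have climb : ∀ k, min j i ≤ k → k ≤ i → ∃ w' ∈ G k (p + 1), d (p + 1) w' = z := by
    intro k hk
    induction k, hk using Int.leInduction with
    | base => exact fun _ => ⟨w, hG (min_le_left j i) _ hj, hw.symm⟩
    | succ k _ ih =>
      intro hki
      obtain ⟨w', hw', hw'z⟩ := ih (by omega)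
      exact exists_preimage_mem_succ hdd (hgr k) (hG hki _ hz) hw' hw'z
  obtain ⟨w', hw', hw'z⟩ := climb i (min_le_right j i) le_rfl
  exact ⟨w', hw', by rw [hw'z, sub_self]; exact zero_mem _⟩

end Acyclic

section Cone

variable {A : Type*} [CommRing A] {C D : ℤ → Type*}
  [∀ q, AddCommGroup (C q)] [∀ q, Module A (C q)] [∀ q, AddCommGroup (D q)] [∀ q, Module A (D q)]
  (dC : ∀ q, C q →ₗ[A] C (q + 1)) (dD : ∀ q, D q →ₗ[A] D (q + 1)) (f : ∀ q, C q →ₗ[A] D q)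

/-- `f : P / P' → Q / Q'` is injective on cohomology. -/
def IsQuasiInjectiveMod (P P' : ∀ q, Submodule A (C q)) (Q Q' : ∀ q, Submodule A (D q)) : Prop :=
  ∀ q, ∀ x ∈ P (q + 1), dC (q + 1) x ∈ P' (q + 1 + 1) →
    (∃ b ∈ Q q, f (q + 1) x - dD q b ∈ Q' (q + 1)) → ∃ a ∈ P q, x - dC q a ∈ P' (q + 1)

/-- `f : P / P' → Q / Q'` is surjective on cohomology. -/
def IsQuasiSurjectiveMod (P P' : ∀ q, Submodule A (C q)) (Q Q' : ∀ q, Submodule A (D q)) : Prop :=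
  ∀ q, ∀ y ∈ Q (q + 1), dD (q + 1) y ∈ Q' (q + 1 + 1) →
    ∃ x ∈ P (q + 1), dC (q + 1) x ∈ P' (q + 1 + 1) ∧
      ∃ b ∈ Q q, y - f (q + 1) x - dD q b ∈ Q' (q + 1)

def coneDiff (q : ℤ) : C (q + 1) × D q →ₗ[A] C (q + 1 + 1) × D (q + 1) :=
  (dC (q + 1) ∘ₗ LinearMap.fst A _ _).prod
    (f (q + 1) ∘ₗ LinearMap.fst A _ _ - dD q ∘ₗ LinearMap.snd A _ _)

def coneFiltration (P : ∀ q, Submodule A (C q)) (Q : ∀ q, Submodule A (D q)) :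
    ∀ q, Submodule A (C (q + 1) × D q) :=
  fun q => (P (q + 1)).prod (Q q)

variable {dC dD f} {P P' : ∀ q, Submodule A (C q)} {Q Q' : ∀ q, Submodule A (D q)}

@[simp]
theorem coneDiff_apply (q : ℤ) (z : C (q + 1) × D q) :
    coneDiff dC dD f q z = (dC (q + 1) z.1, f (q + 1) z.1 - dD q z.2) :=
  rfl

theorem coneDiff_comp (hdC : ∀ q x, dC (q + 1) (dC q x) = 0) (hdD : ∀ q x, dD (q + 1) (dD q x) = 0)
    (hf : ∀ q x, f (q + 1) (dC q x) = dD q (f q x)) (q : ℤ) (z : C (q + 1) × D q) :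
    coneDiff dC dD f (q + 1) (coneDiff dC dD f q z) = 0 := by
  simp [hdC, hdD, hf]

theorem coneFiltration_top :
    coneFiltration (⊤ : ∀ q, Submodule A (C q)) (⊤ : ∀ q, Submodule A (D q)) = ⊤ :=
  funext fun _ => Submodule.prod_top

theorem coneFiltration_bot :
    coneFiltration (⊥ : ∀ q, Submodule A (C q)) (⊥ : ∀ q, Submodule A (D q)) = ⊥ :=
  funext fun _ => Submodule.prod_bot

theorem antitone_coneFiltration {FC : ℤ → ∀ q, Submodule A (C q)} {FD : ℤ → ∀ q, Submodule A (D q)}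
    (hFC : Antitone FC) (hFD : Antitone FD) : Antitone fun i => coneFiltration (FC i) (FD i) :=
  fun _ _ hij q => Submodule.prod_mono (hFC hij (q + 1)) (hFD hij q)

theorem isAcyclicMod_cone (hf : ∀ q x, f (q + 1) (dC q x) = dD q (f q x))
    (hfP : ∀ q, ∀ x ∈ P q, f q x ∈ Q q) (hfP' : ∀ q, ∀ x ∈ P' q, f q x ∈ Q' q)
    (hinj : IsQuasiInjectiveMod dC dD f P P' Q Q')
    (hsurj : IsQuasiSurjectiveMod dC dD f P P' Q Q') :
    IsAcyclicMod (coneDiff dC dD f) (coneFiltration P Q) (coneFiltration P' Q') := by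
  rintro q ⟨x, y⟩ ⟨hx, hy⟩ hd
  obtain ⟨hdx, hfy⟩ : dC (q + 1 + 1) x ∈ P' (q + 1 + 1 + 1) ∧
      f (q + 1 + 1) x - dD (q + 1) y ∈ Q' (q + 1 + 1) := hd
  obtain ⟨a, ha, hxa⟩ := hinj (q + 1) x hx hdx ⟨y, hy, hfy⟩
  have hdy : dD (q + 1) (y - f (q + 1) a) ∈ Q' (q + 1 + 1) := by
    have h := sub_mem (hfP' _ _ hxa) hfy
    rwa [map_sub, hf, sub_sub_sub_cancel_left, ← map_sub] at h
  obtain ⟨x', hx', hdx', b, hb, hyb⟩ := hsurj q _ (sub_mem hy (hfP _ _ ha)) hdy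
  refine ⟨(a + x', -b), ⟨add_mem ha hx', neg_mem hb⟩, ?_, ?_⟩
  · simpa [sub_add_eq_sub_sub] using sub_mem hxa hdx'
  · simpa [sub_add_eq_sub_sub] using hyb

theorem IsAcyclicMod.isQuasiInjectiveMod
    (h : IsAcyclicMod (coneDiff dC dD f) (coneFiltration P Q) (coneFiltration P' Q')) :
    IsQuasiInjectiveMod dC dD f P P' Q Q' := by
  rintro q x hx hdx ⟨b, hb, hfb⟩
  obtain ⟨p, rfl⟩ : ∃ p, q = p + 1 := ⟨q - 1, by ring⟩
  obtain ⟨⟨a, e⟩, ⟨ha, -⟩, hxa, -⟩ := h p (x, b) ⟨hx, hb⟩ ⟨hdx, hfb⟩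
  exact ⟨a, ha, hxa⟩

theorem IsAcyclicMod.isQuasiSurjectiveMod
    (h : IsAcyclicMod (coneDiff dC dD f) (coneFiltration P Q) (coneFiltration P' Q')) :
    IsQuasiSurjectiveMod dC dD f P P' Q Q' := by
  intro q y hy hdy
  obtain ⟨⟨a, e⟩, ⟨ha, he⟩, hxa, hye⟩ :=
    h q (0, y) ⟨zero_mem _, hy⟩ ⟨by simp, by simpa using neg_mem hdy⟩
  simp only [coneDiff_apply, Prod.fst_sub, Prod.snd_sub] at hxa hye
  refine ⟨a, ha, by simpa using neg_mem hxa, -e, neg_mem he, ?_⟩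
  rwa [map_neg, sub_neg_eq_add, sub_add]

theorem isQuasiInjectiveMod_bot_iff :
    IsQuasiInjectiveMod dC dD f P ⊥ Q ⊥ ↔ ∀ q, ∀ x ∈ P (q + 1), dC (q + 1) x = 0 →
      (∃ b ∈ Q q, dD q b = f (q + 1) x) → ∃ a ∈ P q, dC q a = x := by
  simp only [IsQuasiInjectiveMod, Pi.bot_apply, Submodule.mem_bot, sub_eq_zero]
  refine forall_congr' fun q => forall₂_congr fun x _ => ?_
  simp only [eq_comm (a := x), eq_comm (a := f (q + 1) x)]

theorem isQuasiSurjectiveMod_bot_iff :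
    IsQuasiSurjectiveMod dC dD f P ⊥ Q ⊥ ↔ ∀ q, ∀ y ∈ Q (q + 1), dD (q + 1) y = 0 →
      ∃ x ∈ P (q + 1), dC (q + 1) x = 0 ∧ ∃ b ∈ Q q, y - f (q + 1) x = dD q b := by
  simp [IsQuasiSurjectiveMod, sub_eq_zero]

theorem exists_mem_coneFiltration {FC : ℤ → ∀ q, Submodule A (C q)}
    {FD : ℤ → ∀ q, Submodule A (D q)} (hFC : Antitone FC) (hFD : Antitone FD)
    (hC : ∀ q (x : C q), ∃ i, x ∈ FC i q) (hD : ∀ q (y : D q), ∃ i, y ∈ FD i q) (q : ℤ)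
    (z : C (q + 1) × D q) : ∃ i, z ∈ coneFiltration (FC i) (FD i) q := by
  obtain ⟨i, hi⟩ := hC _ z.1
  obtain ⟨j, hj⟩ := hD _ z.2
  exact ⟨min i j, hFC (min_le_left i j) _ hi, hFD (min_le_right i j) _ hj⟩

end Cone

section Telescope

variable (k : Type*) {R : Type*} [CommRing k] [CommRing R] [Algebra k R]

/-- The complex `⋯ → R --1--> R --0--> R --(1-t)--> R --0--> R --1--> R → ⋯`, with `1 - t` in
degree `0`; its only cohomology is `R / (1 - t)` in degree `1`. -/
noncomputable def telescopeDiff (t : R) (q : ℤ) : R →ₗ[k] R :=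
  if Even q then LinearMap.mulLeft k (if q = 0 then 1 - t else 1) else 0

/-- The `t`-adic filtration; it is `⊤` in all nonpositive indices. -/
def spanPowFiltration (t : R) (i : ℤ) : Submodule k R :=
  (Ideal.span {t ^ i.toNat}).restrictScalars k

variable {k} {t : R}

theorem mem_spanPowFiltration {i : ℤ} {x : R} : x ∈ spanPowFiltration k t i ↔ t ^ i.toNat ∣ x := by
  simp [spanPowFiltration, Ideal.mem_span_singleton]

theorem telescopeDiff_of_even {q : ℤ} (hq : Even q) :
    ∃ c, t ∣ 1 - c ∧ ∀ x, telescopeDiff k t q x = c * x := by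
  refine ⟨if q = 0 then 1 - t else 1, ?_, fun x => by simp [telescopeDiff, hq]⟩
  split_ifs <;> simp

theorem telescopeDiff_of_odd {q : ℤ} (hq : Odd q) : telescopeDiff k t q = 0 := by
  simp [telescopeDiff, Int.not_even_iff_odd.mpr hq]

theorem telescopeDiff_comp (q : ℤ) (x : R) :
    telescopeDiff k t (q + 1) (telescopeDiff k t q x) = 0 := by
  rcases Int.even_or_odd q with hq | hq
  · rw [telescopeDiff_of_odd hq.add_one, LinearMap.zero_apply]
  · rw [telescopeDiff_of_odd hq, LinearMap.zero_apply, map_zero]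

theorem telescopeDiff_mem_spanPowFiltration {i : ℤ} (q : ℤ) {x : R}
    (hx : x ∈ spanPowFiltration k t i) : telescopeDiff k t q x ∈ spanPowFiltration k t i := by
  rcases Int.even_or_odd q with hq | hq
  · obtain ⟨c, -, hc⟩ := telescopeDiff_of_even (k := k) (t := t) hq
    rw [hc, mem_spanPowFiltration] at *
    exact hx.mul_left c
  · rw [telescopeDiff_of_odd hq]
    exact zero_mem _

theorem isAcyclicMod_telescope_gr (i : ℤ) :
    IsAcyclicMod (telescopeDiff k t) (fun _ => spanPowFiltration k t i)
      (fun _ => spanPowFiltration k t (i + 1)) := by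
  intro q z hz hdz
  simp only [mem_spanPowFiltration] at hz hdz ⊢
  have hsucc : t ^ (i + 1).toNat ∣ t ^ (i.toNat + 1) := pow_dvd_pow t (by omega)
  rcases Int.even_or_odd q with hq | hq
  · obtain ⟨c, htc, hc⟩ := telescopeDiff_of_even (k := k) (t := t) hq
    refine ⟨z, hz, ?_⟩
    rw [hc, ← one_sub_mul]
    exact hsucc.trans (pow_succ' t _ ▸ mul_dvd_mul htc hz)
  · obtain ⟨c, ⟨m, hm⟩, hc⟩ := telescopeDiff_of_even (k := k) (t := t) hq.add_one
    have hcop : IsCoprime t c := ⟨m, 1, by linear_combination -hm⟩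
    refine ⟨0, dvd_zero _, ?_⟩
    rw [map_zero, sub_zero]
    exact hcop.pow_left.dvd_of_dvd_mul_left (hc z ▸ hdz)

theorem antitone_spanPowFiltration : Antitone (spanPowFiltration k t) := fun i j hij x hx => by
  rw [mem_spanPowFiltration] at *
  exact (pow_dvd_pow t (by omega)).trans hx

theorem spanPowFiltration_zero : spanPowFiltration k t 0 = ⊤ := by
  simp [spanPowFiltration]

theorem iInf_spanPowFiltration [IsNoetherianRing R] [IsDomain R] (ht : ¬IsUnit t) :
    ⨅ i, spanPowFiltration k t i = ⊥ := by
  rw [eq_bot_iff]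
  intro x hx
  have hkrull := Ideal.iInf_pow_eq_bot_of_isDomain (Ideal.span {t})
    (by rwa [Ne, Ideal.span_singleton_eq_top])
  have hx' : x ∈ ⨅ n : ℕ, Ideal.span {t} ^ n := Submodule.mem_iInf _ |>.2 fun n => by
    simpa [Ideal.span_singleton_pow, mem_spanPowFiltration, Ideal.mem_span_singleton] using
      (Submodule.mem_iInf _).1 hx n
  rw [hkrull] at hx'
  exact hx'

theorem telescopeDiff_one : telescopeDiff k t (0 + 1) 1 = 0 := by
  rw [telescopeDiff_of_odd (by decide), LinearMap.zero_apply]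

theorem telescopeDiff_zero_ne_one (ht : ¬IsUnit (1 - t)) (a : R) : telescopeDiff k t 0 a ≠ 1 := by
  intro h
  simp only [telescopeDiff, Even.zero, if_true, LinearMap.mulLeft_apply] at h
  exact ht (.of_mul_eq_one _ h)

end Telescope

open MvPolynomial in
theorem exists_filtered_complex_gr_acyclic_not_acyclic :
    ∃ (E : ℤ → ModuleCat.{u} ℚ) (dE : ∀ q : ℤ, E q ⟶ E (q + 1))
        (G : ℤ → ∀ q : ℤ, Submodule ℚ (E q)),
      (∀ q (x : E q), dE (q + 1) (dE q x) = 0) ∧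
      (∀ i q, G (i + 1) q ≤ G i q) ∧
      (∀ i q, ∀ x ∈ G i q, dE q x ∈ G i (q + 1)) ∧
      (∀ q, ⨅ i : ℤ, G i q = ⊥) ∧
      (∀ q, ⨆ i : ℤ, G i q = ⊤) ∧
      (∀ (i q : ℤ), ∀ x ∈ G i (q + 1), dE (q + 1) x ∈ G (i + 1) (q + 1 + 1) →
        ∃ a ∈ G i q, x - dE q a ∈ G (i + 1) (q + 1)) ∧
      ∃ (q : ℤ) (x : E (q + 1)), dE (q + 1) x = 0 ∧ ∀ a : E q, dE q a ≠ x := by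
  -- `ℚ[X]`, written with a variable set in `Type u` so that it lives in the required universe
  let t : MvPolynomial PUnit.{u + 1} ℚ := X PUnit.unit
  have ht : ¬IsUnit t := fun h => by simpa [t] using h.map (eval fun _ => (0 : ℚ))
  have ht' : ¬IsUnit (1 - t) := fun h => by simpa [t] using h.map (eval fun _ => (1 : ℚ))
  refine ⟨fun _ => ModuleCat.of ℚ _, fun q => ModuleCat.ofHom (telescopeDiff ℚ t q),
    fun i _ => spanPowFiltration ℚ t i, fun q x => telescopeDiff_comp q x,
    fun i _ => antitone_spanPowFiltration (lt_add_one i).le,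
    fun _ q _ hx => telescopeDiff_mem_spanPowFiltration q hx, fun _ => iInf_spanPowFiltration ht,
    fun _ => eq_top_iff.2 (le_iSup_of_le 0 spanPowFiltration_zero.ge), isAcyclicMod_telescope_gr,
    0, 1, telescopeDiff_one (t := t), telescopeDiff_zero_ne_one ht'⟩

theorem filtered_quasiIso_and_counterexample_general
    (A : Type*) [CommRing A]
    (C D : ℤ → Type*)
    [∀ q, AddCommGroup (C q)] [∀ q, Module A (C q)]
    [∀ q, AddCommGroup (D q)] [∀ q, Module A (D q)]
    (dC : ∀ q : ℤ, C q →ₗ[A] C (q + 1)) (dD : ∀ q : ℤ, D q →ₗ[A] D (q + 1))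
    (hdC : ∀ q x, dC (q + 1) (dC q x) = 0) (hdD : ∀ q x, dD (q + 1) (dD q x) = 0)
    (FC : ℤ → ∀ q : ℤ, Submodule A (C q)) (FD : ℤ → ∀ q : ℤ, Submodule A (D q))
    (hFCmono : ∀ i q, FC (i + 1) q ≤ FC i q) (hFDmono : ∀ i q, FD (i + 1) q ≤ FD i q)
    -- `F` on `C` is separated (complete) and exhaustive:
    (hFCexh : ∀ q, ⨆ i : ℤ, FC i q = ⊤)
    -- `F` on `D` is finite in each degree:
    (hFDfin : ∀ q, (∃ a : ℤ, FD a q = ⊤) ∧ ∃ b : ℤ, FD b q = ⊥)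
    (f : ∀ q : ℤ, C q →ₗ[A] D q)
    (hf : ∀ q x, f (q + 1) (dC q x) = dD q (f q x))
    (hffilt : ∀ i q, ∀ x ∈ FC i q, f q x ∈ FD i q)
    -- `f` induces quasi-isomorphisms on all graded pieces:
    (hgrinj : ∀ (i q : ℤ), ∀ x ∈ FC i (q + 1),
      dC (q + 1) x ∈ FC (i + 1) (q + 1 + 1) →
      (∃ b ∈ FD i q, f (q + 1) x - dD q b ∈ FD (i + 1) (q + 1)) →
      ∃ a ∈ FC i q, x - dC q a ∈ FC (i + 1) (q + 1))
    (hgrsurj : ∀ (i q : ℤ), ∀ y ∈ FD i (q + 1),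
      dD (q + 1) y ∈ FD (i + 1) (q + 1 + 1) →
      ∃ x ∈ FC i (q + 1), dC (q + 1) x ∈ FC (i + 1) (q + 1 + 1) ∧
        ∃ b ∈ FD i q, y - f (q + 1) x - dD q b ∈ FD (i + 1) (q + 1))
    -- and `f` is a quasi-isomorphism on underlying complexes:
    (hqinj : ∀ (q : ℤ) (x : C (q + 1)), dC (q + 1) x = 0 →
      (∃ b : D q, dD q b = f (q + 1) x) → ∃ a : C q, dC q a = x)
    (hqsurj : ∀ (q : ℤ) (y : D (q + 1)), dD (q + 1) y = 0 →
      ∃ x : C (q + 1), dC (q + 1) x = 0 ∧ ∃ b : D q, y - f (q + 1) x = dD q b) :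
    -- conclusion 1: `f` is a filtered quasi-isomorphism:
    ((∀ (i q : ℤ), ∀ x ∈ FC i (q + 1), dC (q + 1) x = 0 →
        (∃ b ∈ FD i q, dD q b = f (q + 1) x) → ∃ a ∈ FC i q, dC q a = x) ∧
      (∀ (i q : ℤ), ∀ y ∈ FD i (q + 1), dD (q + 1) y = 0 →
        ∃ x ∈ FC i (q + 1), dC (q + 1) x = 0 ∧ ∃ b ∈ FD i q, y - f (q + 1) x = dD q b)) ∧
    -- conclusion 2 (counterexample): the graded condition alone does not suffice for
    -- non-finite filtrations:
    (∃ (E : ℤ → ModuleCat ℚ) (dE : ∀ q : ℤ, E q ⟶ E (q + 1))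
        (G : ℤ → ∀ q : ℤ, Submodule ℚ (E q)),
      (∀ q (x : E q), dE (q + 1) (dE q x) = 0) ∧
      (∀ i q, G (i + 1) q ≤ G i q) ∧
      (∀ i q, ∀ x ∈ G i q, dE q x ∈ G i (q + 1)) ∧
      (∀ q, ⨅ i : ℤ, G i q = ⊥) ∧
      (∀ q, ⨆ i : ℤ, G i q = ⊤) ∧
      -- all graded pieces are acyclic:
      (∀ (i q : ℤ), ∀ x ∈ G i (q + 1), dE (q + 1) x ∈ G (i + 1) (q + 1 + 1) →
        ∃ a ∈ G i q, x - dE q a ∈ G (i + 1) (q + 1)) ∧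
      -- but the complex is not acyclic:
      ∃ (q : ℤ) (x : E (q + 1)), dE (q + 1) x = 0 ∧ ∀ a : E q, dE q a ≠ x) := by
  have hFC : Antitone FC := antitone_int_of_succ_le hFCmono
  have hFD : Antitone FD := antitone_int_of_succ_le hFDmono
  have hexh := exists_mem_coneFiltration hFC hFD
    (fun q => exists_mem_of_antitone_of_iSup_eq_top (fun _ _ h => hFC h q) (hFCexh q))
    (fun q _ => (hFDfin q).1.imp fun _ ha => by simp [ha])
  have hcone : IsAcyclicMod (coneDiff dC dD f) ⊤ ⊥ := by
    rw [← coneFiltration_top, ← coneFiltration_bot]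
    refine isAcyclicMod_cone hf (fun _ _ _ => trivial) (fun _ _ hx => by simp_all) ?_ ?_
    · exact isQuasiInjectiveMod_bot_iff.2 fun q x _ hx ⟨b, _, hb⟩ =>
        (hqinj q x hx ⟨b, hb⟩).imp fun _ ha => ⟨trivial, ha⟩
    · exact isQuasiSurjectiveMod_bot_iff.2 fun q y _ hy =>
        (hqsurj q y hy).imp fun _ ⟨hx, b, hb⟩ => ⟨trivial, hx, b, trivial, hb⟩
  have hfilt (i : ℤ) : IsAcyclicMod (coneDiff dC dD f) (coneFiltration (FC i) (FD i))
      (coneFiltration ⊥ ⊥) := by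
    rw [coneFiltration_bot]
    exact isAcyclicMod_bot_of_gr (coneDiff_comp hdC hdD hf) (antitone_coneFiltration hFC hFD)
      hexh hcone (fun k => isAcyclicMod_cone hf (hffilt k) (hffilt (k + 1)) (hgrinj k) (hgrsurj k))
      i
  exact ⟨⟨fun i => isQuasiInjectiveMod_bot_iff.1 (hfilt i).isQuasiInjectiveMod,
    fun i => isQuasiSurjectiveMod_bot_iff.1 (hfilt i).isQuasiSurjectiveMod⟩,
    exists_filtered_complex_gr_acyclic_not_acyclic⟩

/-- Let `f : (C•, F) → (D•, F)` be a morphism of filtered cochain complexes of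
`A`-modules, where `F` on `C•` is a decreasing, separated (complete) and exhaustive
filtration by subcomplexes and `F` on `D•` is finite in each degree.  If `f` induces
quasi-isomorphisms `gr_F^i C• → gr_F^i D•` for all `i` and `f` itself is a
quasi-isomorphism on the underlying complexes, then `f` is a filtered
quasi-isomorphism (each `F^i C• → F^i D•` is a quasi-isomorphism).  Moreover the graded
condition alone does not suffice when the filtration is not finite: there is a complex
`C•` with a decreasing, separated and exhaustive filtration by subcomplexes, all of
whose graded pieces are acyclic, while `C•` itself is not acyclic (so `f : C• → 0` is a
`gr`-quasi-isomorphism but not a quasi-isomorphism). -/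
theorem filtered_quasiIso_and_counterexample
    (A : Type*) [CommRing A]
    (C D : ℤ → Type*)
    [∀ q, AddCommGroup (C q)] [∀ q, Module A (C q)]
    [∀ q, AddCommGroup (D q)] [∀ q, Module A (D q)]
    (dC : ∀ q : ℤ, C q →ₗ[A] C (q + 1)) (dD : ∀ q : ℤ, D q →ₗ[A] D (q + 1))
    (hdC : ∀ q x, dC (q + 1) (dC q x) = 0) (hdD : ∀ q x, dD (q + 1) (dD q x) = 0)
    (FC : ℤ → ∀ q : ℤ, Submodule A (C q)) (FD : ℤ → ∀ q : ℤ, Submodule A (D q))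
    (hFCmono : ∀ i q, FC (i + 1) q ≤ FC i q) (hFDmono : ∀ i q, FD (i + 1) q ≤ FD i q)
    (hFCsub : ∀ i q, ∀ x ∈ FC i q, dC q x ∈ FC i (q + 1))
    (hFDsub : ∀ i q, ∀ x ∈ FD i q, dD q x ∈ FD i (q + 1))
    -- `F` on `C` is separated (complete) and exhaustive:
    (hFCcomplete : ∀ q, ⨅ i : ℤ, FC i q = ⊥) (hFCexh : ∀ q, ⨆ i : ℤ, FC i q = ⊤)
    -- `F` on `D` is finite in each degree:
    (hFDfin : ∀ q, (∃ a : ℤ, FD a q = ⊤) ∧ ∃ b : ℤ, FD b q = ⊥)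
    (f : ∀ q : ℤ, C q →ₗ[A] D q)
    (hf : ∀ q x, f (q + 1) (dC q x) = dD q (f q x))
    (hffilt : ∀ i q, ∀ x ∈ FC i q, f q x ∈ FD i q)
    -- `f` induces quasi-isomorphisms on all graded pieces:
    (hgrinj : ∀ (i q : ℤ), ∀ x ∈ FC i (q + 1),
      dC (q + 1) x ∈ FC (i + 1) (q + 1 + 1) →
      (∃ b ∈ FD i q, f (q + 1) x - dD q b ∈ FD (i + 1) (q + 1)) →
      ∃ a ∈ FC i q, x - dC q a ∈ FC (i + 1) (q + 1))
    (hgrsurj : ∀ (i q : ℤ), ∀ y ∈ FD i (q + 1),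
      dD (q + 1) y ∈ FD (i + 1) (q + 1 + 1) →
      ∃ x ∈ FC i (q + 1), dC (q + 1) x ∈ FC (i + 1) (q + 1 + 1) ∧
        ∃ b ∈ FD i q, y - f (q + 1) x - dD q b ∈ FD (i + 1) (q + 1))
    -- and `f` is a quasi-isomorphism on underlying complexes:
    (hqinj : ∀ (q : ℤ) (x : C (q + 1)), dC (q + 1) x = 0 →
      (∃ b : D q, dD q b = f (q + 1) x) → ∃ a : C q, dC q a = x)
    (hqsurj : ∀ (q : ℤ) (y : D (q + 1)), dD (q + 1) y = 0 →
      ∃ x : C (q + 1), dC (q + 1) x = 0 ∧ ∃ b : D q, y - f (q + 1) x = dD q b) :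
    -- conclusion 1: `f` is a filtered quasi-isomorphism:
    ((∀ (i q : ℤ), ∀ x ∈ FC i (q + 1), dC (q + 1) x = 0 →
        (∃ b ∈ FD i q, dD q b = f (q + 1) x) → ∃ a ∈ FC i q, dC q a = x) ∧
      (∀ (i q : ℤ), ∀ y ∈ FD i (q + 1), dD (q + 1) y = 0 →
        ∃ x ∈ FC i (q + 1), dC (q + 1) x = 0 ∧ ∃ b ∈ FD i q, y - f (q + 1) x = dD q b)) ∧
    -- conclusion 2 (counterexample): the graded condition alone does not suffice for
    -- non-finite filtrations:
    (∃ (E : ℤ → ModuleCat ℚ) (dE : ∀ q : ℤ, E q ⟶ E (q + 1))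
        (G : ℤ → ∀ q : ℤ, Submodule ℚ (E q)),
      (∀ q (x : E q), dE (q + 1) (dE q x) = 0) ∧
      (∀ i q, G (i + 1) q ≤ G i q) ∧
      (∀ i q, ∀ x ∈ G i q, dE q x ∈ G i (q + 1)) ∧
      (∀ q, ⨅ i : ℤ, G i q = ⊥) ∧
      (∀ q, ⨆ i : ℤ, G i q = ⊤) ∧
      -- all graded pieces are acyclic:
      (∀ (i q : ℤ), ∀ x ∈ G i (q + 1), dE (q + 1) x ∈ G (i + 1) (q + 1 + 1) →
        ∃ a ∈ G i q, x - dE q a ∈ G (i + 1) (q + 1)) ∧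
      -- but the complex is not acyclic:
      ∃ (q : ℤ) (x : E (q + 1)), dE (q + 1) x = 0 ∧ ∀ a : E q, dE q a ≠ x) :=
  filtered_quasiIso_and_counterexample_general A C D dC dD hdC hdD FC FD hFCmono hFDmono hFCexh
    hFDfin f hf hffilt hgrinj hgrsurj hqinj hqsurj
end
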